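/- arXiv:1802.06192 — 6 statements merged into one kernel-verified Lean document; each statement's English description precedes it below -/
import Mathlib

section
/- Let μ > 0 and let N be a Poisson(μ)-distributed random variable. Then E[(N − 2μ)⁺] ≤ 6·exp(−μ/3). -/
open MeasureTheory ProbabilityTheory Real
open scoped NNReal Nat

/-! Since `x⁺ ≤ exp (t x - 1) / t` for every `t > 0`, the excess `E[(N - a)⁺]` is bounded by
`exp (-t a - 1) / t` times the moment generating function `E[exp (t N)] = exp (μ (eᵗ - 1))`.
Taking `t = log 2` and `a = 2μ` gives `exp (-(2 log 2 - 1) μ) / (e log 2)`, and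
`2 log 2 - 1 > 1/3`, `1 / (e log 2) < 6`. -/

lemma max_zero_le_exp_mul_sub_one_div {t : ℝ} (ht : 0 < t) (x : ℝ) :
    max x 0 ≤ exp (t * x - 1) / t := by
  refine max_le ?_ (by positivity)
  rw [le_div_iff₀ ht]
  linarith [add_one_le_exp (t * x - 1)]

lemma integral_max_sub_zero_le_mgf {Ω : Type*} [MeasurableSpace Ω] {P : Measure Ω}
    {X : Ω → ℝ} {t : ℝ} (ht : 0 < t) (hX : Integrable (fun ω ↦ exp (t * X ω)) P)
    (a : ℝ) :
    ∫ ω, max (X ω - a) 0 ∂P ≤ exp (-t * a - 1) / t * mgf X P t := by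
  have hpt (ω : Ω) : max (X ω - a) 0 ≤ exp (-t * a - 1) / t * exp (t * X ω) := by
    calc max (X ω - a) 0 ≤ exp (t * (X ω - a) - 1) / t := max_zero_le_exp_mul_sub_one_div ht _
      _ = exp (-t * a - 1) / t * exp (t * X ω) := by
        rw [div_mul_eq_mul_div, ← exp_add]; ring_nf
  rw [mgf, ← integral_const_mul]
  exact integral_mono_of_nonneg (ae_of_all _ fun _ ↦ le_max_right _ _) (hX.const_mul _)
    (ae_of_all _ hpt)

lemma hasSum_poisson_mul_exp_mul (r : ℝ≥0) (t : ℝ) :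
    HasSum (fun n : ℕ ↦ exp (-r) * r ^ n / n ! * exp (t * n)) (exp (r * (exp t - 1))) := by
  have hterm (n : ℕ) :
      exp (-r) * r ^ n / n ! * exp (t * n) = exp (-r) * ((r * exp t) ^ n / n !) := by
    rw [mul_pow, mul_comm t, exp_nat_mul]
    ring
  rw [funext hterm, show (r : ℝ) * (exp t - 1) = -r + r * exp t by ring, exp_add]
  simpa only [← exp_eq_exp_ℝ] using
    (NormedSpace.expSeries_div_hasSum_exp ((r : ℝ) * exp t)).mul_left (exp (-r))

lemma integrable_exp_mul_poissonMeasure (r : ℝ≥0) (t : ℝ) :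
    Integrable (fun n : ℕ ↦ exp (t * n)) Po(r) := by
  rw [integrable_poissonMeasure_iff]
  simpa only [norm_eq_abs, abs_exp] using (hasSum_poisson_mul_exp_mul r t).summable

lemma mgf_poissonMeasure (r : ℝ≥0) (t : ℝ) :
    mgf (fun n : ℕ ↦ (n : ℝ)) Po(r) t = exp (r * (exp t - 1)) := by
  rw [mgf, integral_poissonMeasure]
  exact (hasSum_poisson_mul_exp_mul r t).tsum_eq

lemma hasLaw_poissonMeasure {Ω : Type*} [MeasurableSpace Ω] {P : Measure Ω} {N : Ω → ℕ}
    (hN : Measurable N) (r : ℝ≥0)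
    (hlaw : ∀ n : ℕ, P {ω | N ω = n} = ENNReal.ofReal (exp (-r) * r ^ n / n !)) :
    HasLaw N Po(r) P where
  aemeasurable := hN.aemeasurable
  map_eq := Measure.ext_of_singleton fun n ↦ by
    rw [Measure.map_apply hN (measurableSet_singleton n), poissonMeasure_singleton]
    exact hlaw n

theorem poisson_expectation_excess_bound_general
    {Ω : Type*} [MeasurableSpace Ω] (P : Measure Ω)
    (μ : ℝ) (hμ : 0 < μ) (N : Ω → ℕ) (hNmeas : Measurable N)
    (hN : ∀ k : ℕ, P {ω | N ω = k}
      = ENNReal.ofReal (Real.exp (-μ) * μ ^ k / (Nat.factorial k))) :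
    ∫ ω, max ((N ω : ℝ) - 2 * μ) 0 ∂P ≤ 6 * Real.exp (-μ / 3) := by
  set r : ℝ≥0 := ⟨μ, hμ.le⟩
  have hr : (r : ℝ) = μ := rfl
  have hlaw : HasLaw N Po(r) P := hasLaw_poissonMeasure hNmeas r hN
  have hlog2 : 0 < log 2 := log_pos one_lt_two
  calc ∫ ω, max ((N ω : ℝ) - 2 * μ) 0 ∂P
      = ∫ n : ℕ, max ((n : ℝ) - 2 * μ) 0 ∂Po(r) :=
        hlaw.integral_comp (f := fun n : ℕ ↦ max ((n : ℝ) - 2 * μ) 0) .of_discrete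
    _ ≤ exp (-log 2 * (2 * μ) - 1) / log 2 * mgf (fun n : ℕ ↦ (n : ℝ)) Po(r) (log 2) :=
      integral_max_sub_zero_le_mgf hlog2 (integrable_exp_mul_poissonMeasure r _) _
    _ = exp (-(2 * log 2 - 1) * μ) * (exp (-1) / log 2) := by
      rw [mgf_poissonMeasure, exp_log two_pos, hr, div_mul_eq_mul_div, ← exp_add,
        ← mul_div_assoc, ← exp_add]
      ring_nf
    _ ≤ exp (-μ / 3) * 6 := by
      gcongr
      · nlinarith [log_two_gt_d9]
      · rw [div_le_iff₀ hlog2]; linarith [exp_neg_one_lt_half, log_two_gt_d9]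
    _ = 6 * exp (-μ / 3) := mul_comm _ _

/-- If `N` is Poisson(μ)-distributed with μ > 0, then `E[(N − 2μ)⁺] ≤ 6·exp(−μ/3)`. -/
theorem poisson_expectation_excess_bound
    {Ω : Type*} [MeasurableSpace Ω] (P : Measure Ω) [IsProbabilityMeasure P]
    (μ : ℝ) (hμ : 0 < μ) (N : Ω → ℕ) (hNmeas : Measurable N)
    (hN : ∀ k : ℕ, P {ω | N ω = k}
      = ENNReal.ofReal (Real.exp (-μ) * μ ^ k / (Nat.factorial k))) :
    ∫ ω, max ((N ω : ℝ) - 2 * μ) 0 ∂P ≤ 6 * Real.exp (-μ / 3) :=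
  poisson_expectation_excess_bound_general P μ hμ N hNmeas hN
end

section
/- Let J be a finite index set, and for each j ∈ J let X_j be independent Poisson(μ_j)-distributed random variables with μ_j > 0. Let a_j ≥ 0, ν_j ≥ 0 and C be real numbers such that μ_j ≤ ν_j for all j ∈ J and Σ_{j∈J} a_j μ_j ≤ C. Then E[(Σ_{j∈J} a_j X_j − C)⁺] ≤ √(Σ_{j∈J} a_j² ν_j). -/
/-!
With `S = ∑ a_j X_j`, the hypothesis `∑ a_j μ_j ≤ C` says `E S ≤ C`, so
`(S - C)⁺ ≤ |S - E S|`, and by Cauchy–Schwarz `E|S - E S| ≤ √Var S`. By independence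
`Var S = ∑ a_j² Var X_j`, and a Poisson(μ) variable has variance μ, which follows from the
factorial-moment identity `E[N f(N)] = μ E[f(N + 1)]`.
-/

open MeasureTheory ProbabilityTheory
open scoped NNReal Nat

namespace ProbabilityTheory

section Poisson

variable {r : ℝ≥0}

lemma natCast_succ_mul_poisson_weight (r : ℝ≥0) (n : ℕ) :
    ((n + 1 : ℕ) : ℝ) * (Real.exp (-r) * r ^ (n + 1) / (n + 1)!)
      = r * (Real.exp (-r) * r ^ n / n !) := by
  rw [Nat.factorial_succ]
  push_cast
  field_simp
  ring

/-- The identity `E[N f(N)] = r E[f(N + 1)]` for `N ~ Po(r)`, at the level of series. -/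
lemma HasSum.natCast_mul_poisson_weight {f : ℕ → ℝ} {s : ℝ}
    (h : HasSum (fun n ↦ f (n + 1) * (Real.exp (-r) * r ^ n / n !)) s) :
    HasSum (fun n : ℕ ↦ n * f n * (Real.exp (-r) * r ^ n / n !)) (r * s) := by
  refine (hasSum_nat_add_iff' 1).mp ?_
  simp only [Finset.range_one, Finset.sum_singleton, Nat.cast_zero, zero_mul, sub_zero]
  refine (h.mul_left (r : ℝ)).congr_fun fun n ↦ ?_
  linear_combination f (n + 1) * natCast_succ_mul_poisson_weight r n

lemma hasSum_natCast_mul_poisson_weight (r : ℝ≥0) :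
    HasSum (fun n : ℕ ↦ n * (Real.exp (-r) * r ^ n / n !)) r := by
  have h := HasSum.natCast_mul_poisson_weight (f := fun _ ↦ 1)
    (by simpa using hasSum_one_poissonMeasure r)
  simpa using h

lemma hasSum_natCast_sq_mul_poisson_weight (r : ℝ≥0) :
    HasSum (fun n : ℕ ↦ (n : ℝ) ^ 2 * (Real.exp (-r) * r ^ n / n !)) (r * (r + 1)) := by
  have h := (hasSum_natCast_mul_poisson_weight r).add (hasSum_one_poissonMeasure r)
  simpa [sq, mul_assoc] using HasSum.natCast_mul_poisson_weight (f := fun n ↦ (n : ℝ))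
    (by simpa [add_mul] using h)

lemma integral_natCast_poissonMeasure (r : ℝ≥0) : ∫ n, (n : ℝ) ∂Po(r) = r := by
  rw [integral_poissonMeasure]
  simpa [mul_comm] using (hasSum_natCast_mul_poisson_weight r).tsum_eq

lemma memLp_natCast_poissonMeasure (r : ℝ≥0) : MemLp (fun n : ℕ ↦ (n : ℝ)) 2 Po(r) := by
  refine (memLp_two_iff_integrable_sq .of_discrete).2 (integrable_poissonMeasure_iff.2 ?_)
  simpa [mul_comm] using (hasSum_natCast_sq_mul_poisson_weight r).summable

lemma variance_natCast_poissonMeasure (r : ℝ≥0) : Var[fun n : ℕ ↦ (n : ℝ); Po(r)] = r := by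
  rw [variance_eq_sub (memLp_natCast_poissonMeasure r), integral_natCast_poissonMeasure]
  have h := (hasSum_natCast_sq_mul_poisson_weight r).tsum_eq
  simp only [Pi.pow_apply, integral_poissonMeasure, smul_eq_mul]
  rw [tsum_congr fun n ↦ mul_comm _ _, h]
  ring

variable {Ω : Type*} {mΩ : MeasurableSpace Ω} {P : Measure Ω} {X : Ω → ℕ}

lemma hasLaw_poissonMeasure_of_measure_eq (hX : Measurable X)
    (h : ∀ n : ℕ, P {ω | X ω = n} = ENNReal.ofReal (Real.exp (-r) * r ^ n / n !)) :
    HasLaw X Po(r) P where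
  map_eq := Measure.ext_of_singleton fun n ↦ by
    rw [Measure.map_apply hX (measurableSet_singleton n), poissonMeasure_singleton]
    exact h n

namespace HasLaw

lemma integral_natCast_of_poisson (hX : HasLaw X Po(r) P) :
    P[fun ω ↦ (X ω : ℝ)] = (r : ℝ) := by
  rw [← integral_natCast_poissonMeasure r]
  exact hX.integral_comp (f := fun n : ℕ ↦ (n : ℝ)) .of_discrete

lemma memLp_natCast_of_poisson (hX : HasLaw X Po(r) P) : MemLp (fun ω ↦ (X ω : ℝ)) 2 P :=
  (memLp_map_measure_iff .of_discrete hX.aemeasurable).1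
    (hX.map_eq ▸ memLp_natCast_poissonMeasure r)

lemma variance_natCast_of_poisson (hX : HasLaw X Po(r) P) :
    Var[fun ω ↦ (X ω : ℝ); P] = (r : ℝ) := by
  rw [← variance_natCast_poissonMeasure r, ← hX.map_eq, variance_map .of_discrete hX.aemeasurable]
  rfl

end HasLaw

end Poisson

section Variance

variable {Ω : Type*} {mΩ : MeasurableSpace Ω} {P : Measure Ω}

lemma iIndepFun.variance_fun_sum_comp {ι : Type*} [Fintype ι] {β : ι → Type*}
    [∀ i, MeasurableSpace (β i)] {X : ∀ i, Ω → β i} (hX : iIndepFun X P) {f : ∀ i, β i → ℝ}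
    (hf : ∀ i, Measurable (f i)) (hfX : ∀ i, MemLp (fun ω ↦ f i (X i ω)) 2 P) :
    Var[fun ω ↦ ∑ i, f i (X i ω); P] = ∑ i, Var[fun ω ↦ f i (X i ω); P] := by
  have h := IndepFun.variance_sum (s := Finset.univ) (X := fun i ω ↦ f i (X i ω))
    (fun i _ ↦ hfX i) (fun i _ j _ hij ↦ (hX.indepFun hij).comp (hf i) (hf j))
  simpa [Finset.sum_fn] using h

variable [IsProbabilityMeasure P]

-- `(E|Z|)² ≤ E[Z²]` for `Z = X - E X` is `Var |Z| ≥ 0`.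
lemma integral_abs_sub_integral_le_sqrt_variance {X : Ω → ℝ} (hX : MemLp X 2 P) :
    ∫ ω, |X ω - P[X]| ∂P ≤ √Var[X; P] := by
  have hZ : MemLp (fun ω ↦ X ω - P[X]) 2 P := hX.sub (memLp_const _)
  have h : 0 ≤ Var[|fun ω ↦ X ω - P[X]|; P] := variance_nonneg _ _
  rw [variance_eq_sub hZ.abs] at h
  rw [variance_eq_integral hX.aemeasurable, Real.le_sqrt (integral_nonneg fun _ ↦ abs_nonneg _)
    (integral_nonneg fun _ ↦ sq_nonneg _)]
  simpa [sq_abs] using h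

lemma integral_max_sub_le_sqrt_variance {X : Ω → ℝ} (hX : MemLp X 2 P) {c : ℝ} (hc : P[X] ≤ c) :
    ∫ ω, max (X ω - c) 0 ∂P ≤ √Var[X; P] := by
  refine le_trans ?_ (integral_abs_sub_integral_le_sqrt_variance hX)
  refine integral_mono_of_nonneg (ae_of_all _ fun _ ↦ le_max_right _ _)
    ((hX.sub (memLp_const _)).integrable one_le_two).abs (ae_of_all _ fun ω ↦ ?_)
  exact max_le (by linarith [le_abs_self (X ω - P[X])]) (abs_nonneg _)

end Variance

end ProbabilityTheory

theorem expected_excess_le_sqrt_general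
    {Ω : Type*} [MeasurableSpace Ω] (P : Measure Ω) [IsProbabilityMeasure P]
    {J : Type*} [Fintype J] (X : J → Ω → ℕ) (hXmeas : ∀ j, Measurable (X j))
    (μ ν a : J → ℝ) (C : ℝ)
    (hμ : ∀ j, 0 < μ j)
    (hpois : ∀ j, ∀ k : ℕ, P {ω | X j ω = k}
      = ENNReal.ofReal (Real.exp (-(μ j)) * (μ j) ^ k / (Nat.factorial k)))
    (hindep : iIndepFun X P)
    (hμν : ∀ j, μ j ≤ ν j) (hC : ∑ j, a j * μ j ≤ C) :
    ∫ ω, max (∑ j, a j * (X j ω : ℝ) - C) 0 ∂P ≤ Real.sqrt (∑ j, (a j) ^ 2 * ν j) := by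
  have hr (j : J) : ((μ j).toNNReal : ℝ) = μ j := Real.coe_toNNReal _ (hμ j).le
  have hlaw (j : J) : HasLaw (X j) (poissonMeasure (μ j).toNNReal) P :=
    hasLaw_poissonMeasure_of_measure_eq (hXmeas j) (by simpa [hr] using hpois j)
  have hmem (j : J) : MemLp (fun ω ↦ a j * (X j ω : ℝ)) 2 P :=
    (hlaw j).memLp_natCast_of_poisson.const_mul (a j)
  have hmean : P[fun ω ↦ ∑ j, a j * (X j ω : ℝ)] = ∑ j, a j * μ j := by
    rw [integral_finsetSum _ fun j _ ↦ (hmem j).integrable one_le_two]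
    simp [integral_const_mul, (hlaw _).integral_natCast_of_poisson, hr]
  have hvar : Var[fun ω ↦ ∑ j, a j * (X j ω : ℝ); P] = ∑ j, a j ^ 2 * μ j := by
    rw [hindep.variance_fun_sum_comp (f := fun j n ↦ a j * n) (fun _ ↦ .of_discrete) hmem]
    simp [variance_const_mul, (hlaw _).variance_natCast_of_poisson, hr]
  calc ∫ ω, max (∑ j, a j * (X j ω : ℝ) - C) 0 ∂P
      ≤ √Var[fun ω ↦ ∑ j, a j * (X j ω : ℝ); P] :=
        integral_max_sub_le_sqrt_variance (memLp_finsetSum _ fun j _ ↦ hmem j) (hmean ▸ hC)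
    _ ≤ √(∑ j, a j ^ 2 * ν j) := Real.sqrt_le_sqrt <| hvar ▸
        Finset.sum_le_sum fun j _ ↦ mul_le_mul_of_nonneg_left (hμν j) (sq_nonneg _)

/-- Key estimate for the SPA heuristic: if `X_j` are independent Poisson(μ_j) random
variables, `a_j ≥ 0`, `μ_j ≤ ν_j` and `Σ a_j μ_j ≤ C`, then
`E[(Σ a_j X_j − C)⁺] ≤ √(Σ a_j² ν_j)`. -/
theorem expected_excess_le_sqrt
    {Ω : Type*} [MeasurableSpace Ω] (P : Measure Ω) [IsProbabilityMeasure P]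
    {J : Type*} [Fintype J] (X : J → Ω → ℕ) (hXmeas : ∀ j, Measurable (X j))
    (μ ν a : J → ℝ) (C : ℝ)
    (hμ : ∀ j, 0 < μ j) (ha : ∀ j, 0 ≤ a j) (hν : ∀ j, 0 ≤ ν j)
    (hpois : ∀ j, ∀ k : ℕ, P {ω | X j ω = k}
      = ENNReal.ofReal (Real.exp (-(μ j)) * (μ j) ^ k / (Nat.factorial k)))
    (hindep : iIndepFun X P)
    (hμν : ∀ j, μ j ≤ ν j) (hC : ∑ j, a j * μ j ≤ C) :
    ∫ ω, max (∑ j, a j * (X j ω : ℝ) - C) 0 ∂P ≤ Real.sqrt (∑ j, (a j) ^ 2 * ν j) :=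
  expected_excess_le_sqrt_general P X hXmeas μ ν a C hμ hpois hindep hμν hC
end

section
/- Let A be an m×n real matrix, C ∈ ℝ^m, r ∈ ℝ^n, λ ∈ ℝ^n with λ_j ≥ 0, and T > 0. Let Λ : Ω → ℝ^n be an integrable random vector with E[Λ_j] = λ_j T for each j, and let Z : Ω → ℝ^n be a random vector satisfying almost surely A·Z ≤ C (componentwise) and 0 ≤ Z_j ≤ Λ_j for each j. Then Σ_j r_j E[Z_j] ≤ sup{ Σ_j r_j y_j : y ∈ ℝ^n, A·y ≤ C, 0 ≤ y_j ≤ λ_j T for all j }. In particular, the expected hindsight-optimal revenue is at most the optimal value of the deterministic LP. -/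
/-! Taking expectations turns the almost-sure constraints `A·Z ≤ C`, `0 ≤ Z ≤ Λ` into the DLP
constraints `A·E[Z] ≤ C`, `0 ≤ E[Z] ≤ λT`, so `E[Z]` is DLP-feasible; and the DLP objective is
bounded above on the box `0 ≤ y ≤ λT`, so its supremum dominates `r·E[Z]`. -/

open MeasureTheory

section

variable {ι : Type*} [Fintype ι]

lemma sum_mul_le_sum_abs_mul_of_mem_box {r y u : ι → ℝ} (hy : ∀ j, 0 ≤ y j ∧ y j ≤ u j) :
    ∑ j, r j * y j ≤ ∑ j, |r j| * u j :=
  Finset.sum_le_sum fun j _ =>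
    calc r j * y j ≤ |r j| * y j := mul_le_mul_of_nonneg_right (le_abs_self _) (hy j).1
      _ ≤ |r j| * u j := mul_le_mul_of_nonneg_left (hy j).2 (abs_nonneg _)

lemma bddAbove_linear_values_of_box (feasible : (ι → ℝ) → Prop) (r u : ι → ℝ) :
    BddAbove {v : ℝ | ∃ y : ι → ℝ, feasible y ∧ (∀ j, 0 ≤ y j ∧ y j ≤ u j) ∧
      v = ∑ j, r j * y j} := by
  refine ⟨∑ j, |r j| * u j, ?_⟩
  rintro v ⟨y, -, hy, rfl⟩
  exact sum_mul_le_sum_abs_mul_of_mem_box hy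

variable {Ω : Type*} [MeasurableSpace Ω] {P : Measure Ω}

lemma sum_mul_integral_le_of_ae_sum_mul_le [IsProbabilityMeasure P] {f : Ω → ι → ℝ}
    (hf : ∀ j, Integrable (fun ω => f ω j) P) (a : ι → ℝ) {c : ℝ}
    (h : ∀ᵐ ω ∂P, ∑ j, a j * f ω j ≤ c) :
    ∑ j, a j * ∫ ω, f ω j ∂P ≤ c :=
  calc ∑ j, a j * ∫ ω, f ω j ∂P = ∫ ω, ∑ j, a j * f ω j ∂P := by
        rw [integral_finsetSum _ fun j _ => (hf j).const_mul (a j)]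
        simp only [integral_const_mul]
    _ ≤ ∫ _, c ∂P :=
        integral_mono_ae (integrable_finsetSum _ fun j _ => (hf j).const_mul (a j))
          (integrable_const c) h
    _ = c := by simp

lemma MeasureTheory.Integrable.of_ae_nonneg_of_le {f g : Ω → ℝ} (hg : Integrable g P)
    (hf : Measurable f) (h : ∀ᵐ ω ∂P, 0 ≤ f ω ∧ f ω ≤ g ω) : Integrable f P :=
  hg.mono' hf.aestronglyMeasurable <| h.mono fun _ hω => by
    rw [Real.norm_of_nonneg hω.1]
    exact hω.2

end

theorem hindsight_le_dlp_general
    {Ω : Type*} [MeasurableSpace Ω] (P : Measure Ω) [IsProbabilityMeasure P]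
    {m n : ℕ} (A : Matrix (Fin m) (Fin n) ℝ) (C : Fin m → ℝ) (r : Fin n → ℝ)
    (lam : Fin n → ℝ) (T : ℝ)
    (Λ : Ω → Fin n → ℝ) (hΛint : ∀ j, Integrable (fun ω => Λ ω j) P)
    (hΛmean : ∀ j, ∫ ω, Λ ω j ∂P = lam j * T)
    (Z : Ω → Fin n → ℝ) (hZmeas : ∀ j, Measurable (fun ω => Z ω j))
    (hAZ : ∀ᵐ ω ∂P, ∀ l, ∑ j, A l j * Z ω j ≤ C l)
    (hZbound : ∀ᵐ ω ∂P, ∀ j, 0 ≤ Z ω j ∧ Z ω j ≤ Λ ω j) :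
    ∑ j, r j * ∫ ω, Z ω j ∂P
      ≤ sSup {v : ℝ | ∃ y : Fin n → ℝ, (∀ l, ∑ j, A l j * y j ≤ C l) ∧
          (∀ j, 0 ≤ y j ∧ y j ≤ lam j * T) ∧ v = ∑ j, r j * y j} := by
  have hZint : ∀ j, Integrable (fun ω => Z ω j) P := fun j =>
    (hΛint j).of_ae_nonneg_of_le (hZmeas j) (hZbound.mono fun _ hω => hω j)
  refine le_csSup (bddAbove_linear_values_of_box (fun y => ∀ l, ∑ j, A l j * y j ≤ C l) r
    fun j => lam j * T) ⟨fun j => ∫ ω, Z ω j ∂P, fun l => ?_, fun j => ⟨?_, ?_⟩, rfl⟩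
  · exact sum_mul_integral_le_of_ae_sum_mul_le hZint (A l) (hAZ.mono fun _ hω => hω l)
  · exact integral_nonneg_of_ae (hZbound.mono fun _ hω => (hω j).1)
  · rw [← hΛmean j]
    exact integral_mono_ae (hZint j) (hΛint j) (hZbound.mono fun _ hω => (hω j).2)

/-- The expected hindsight-optimal revenue is at most the optimal value of the
deterministic LP: if `A·Z ≤ C` and `0 ≤ Z_j ≤ Λ_j` almost surely, with `E[Λ_j] = λ_j T`,
then `Σ_j r_j E[Z_j]` is at most the DLP value. -/
theorem hindsight_le_dlp
    {Ω : Type*} [MeasurableSpace Ω] (P : Measure Ω) [IsProbabilityMeasure P]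
    {m n : ℕ} (A : Matrix (Fin m) (Fin n) ℝ) (C : Fin m → ℝ) (r : Fin n → ℝ)
    (lam : Fin n → ℝ) (hlam : ∀ j, 0 ≤ lam j) (T : ℝ) (hT : 0 < T)
    (Λ : Ω → Fin n → ℝ) (hΛint : ∀ j, Integrable (fun ω => Λ ω j) P)
    (hΛmean : ∀ j, ∫ ω, Λ ω j ∂P = lam j * T)
    (Z : Ω → Fin n → ℝ) (hZmeas : ∀ j, Measurable (fun ω => Z ω j))
    (hAZ : ∀ᵐ ω ∂P, ∀ l, ∑ j, A l j * Z ω j ≤ C l)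
    (hZbound : ∀ᵐ ω ∂P, ∀ j, 0 ≤ Z ω j ∧ Z ω j ≤ Λ ω j) :
    ∑ j, r j * ∫ ω, Z ω j ∂P
      ≤ sSup {v : ℝ | ∃ y : Fin n → ℝ, (∀ l, ∑ j, A l j * y j ≤ C l) ∧
          (∀ j, 0 ≤ y j ∧ y j ≤ lam j * T) ∧ v = ∑ j, r j * y j} :=
  hindsight_le_dlp_general P A C r lam T Λ hΛint hΛmean Z hZmeas hAZ hZbound
end

section
/- Let A be an m×n real matrix with all entries a_{lj} ≥ 0, let r ∈ ℝ^n with r_j ≥ 0, λ ∈ ℝ^n with λ_j ≥ 0, and let b, b' ∈ ℝ^m with b_l ≥ 0 and b'_l ≥ 0 for all l. Define V(c) := max{ Σ_j r_j x_j : A·x ≤ c, 0 ≤ x_j ≤ λ_j for all j } for c ∈ ℝ^m with c ≥ 0, and for each resource l define r^l_max := max{ r_j / a_{lj} : j with a_{lj} > 0 } (with r^l_max := 0 if a_{lj} = 0 for all j). Then V(b) − V(b') ≤ Σ_{l=1}^m r^l_max · (b_l − b'_l)⁺. -/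
/-!
Take any plan `x` feasible for `b`. For each resource `l` pick `δ l ∈ [0, 1]` with
`δ l · (A x)_l = min ((A x)_l) (b'_l)`, and scale `x_j` by the product of the `δ l` over the
resources `l` that product `j` uses. The scaled plan is feasible for `b'`, since `A ≥ 0`.
By `1 - ∏ δ ≤ ∑ (1 - δ)` the revenue lost is at most
`∑_l ∑_{j : a_lj > 0} r_j x_j (1 - δ l)`, and `r_j ≤ r^l_max a_lj` bounds the inner sum by
`r^l_max (1 - δ l) (A x)_l ≤ r^l_max (b_l - b'_l)⁺`.
-/

/-- The optimal value of the deterministic LP with per-period capacity vector `c`: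
`V(c) = max{ Σ_j r_j x_j : A·x ≤ c, 0 ≤ x_j ≤ λ_j }`. -/
noncomputable def dlpValue {m n : ℕ} (A : Matrix (Fin m) (Fin n) ℝ)
    (r lam : Fin n → ℝ) (c : Fin m → ℝ) : ℝ :=
  sSup {v : ℝ | ∃ x : Fin n → ℝ, (∀ l, ∑ j, A l j * x j ≤ c l) ∧
      (∀ j, 0 ≤ x j ∧ x j ≤ lam j) ∧ v = ∑ j, r j * x j}

/-- The largest possible revenue gain by increasing the capacity of resource `l` by
one unit: `max{ r_j / a_{lj} : a_{lj} > 0 }` (and `0` if `a_{lj} = 0` for all `j`). -/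
noncomputable def rMax {m n : ℕ} (A : Matrix (Fin m) (Fin n) ℝ)
    (r : Fin n → ℝ) (l : Fin m) : ℝ :=
  sSup {v : ℝ | ∃ j : Fin n, 0 < A l j ∧ v = r j / A l j}

open Finset

theorem Finset.one_sub_prod_le_sum_one_sub {ι R : Type*} [CommRing R] [PartialOrder R]
    [IsOrderedRing R] (s : Finset ι) {f : ι → R} (h0 : ∀ i ∈ s, 0 ≤ f i)
    (h1 : ∀ i ∈ s, f i ≤ 1) :
    1 - ∏ i ∈ s, f i ≤ ∑ i ∈ s, (1 - f i) := by
  classical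
  induction s using Finset.induction_on with
  | empty => simp
  | insert a s ha ih =>
    simp only [mem_insert, forall_eq_or_imp] at h0 h1
    have hP : ∏ i ∈ s, f i ≤ 1 := prod_le_one h0.2 h1.2
    rw [prod_insert ha, sum_insert ha]
    calc 1 - f a * ∏ i ∈ s, f i = (1 - f a) + f a * (1 - ∏ i ∈ s, f i) := by ring
      _ ≤ (1 - f a) + (1 - ∏ i ∈ s, f i) := by
        gcongr; exact mul_le_of_le_one_left (sub_nonneg.2 hP) h1.1
      _ ≤ (1 - f a) + ∑ i ∈ s, (1 - f i) := by gcongr; exact ih h0.2 h1.2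

theorem min_one_div_mul_self {K : Type*} [Field K] [LinearOrder K] [IsStrictOrderedRing K]
    {s t : K} (hs : 0 ≤ s) (ht : 0 ≤ t) : min 1 (t / s) * s = min s t := by
  rcases hs.eq_or_lt with rfl | hs
  · simp [ht]
  · rw [min_mul_of_nonneg _ _ hs.le, one_mul, div_mul_cancel₀ _ hs.ne']

section ShrinkFactor

variable {ι κ : Type*} [Fintype ι] (A : ι → κ → ℝ) {δ : ι → ℝ}

noncomputable def shrinkFactor (δ : ι → ℝ) (j : κ) : ℝ :=
  ∏ l, if 0 < A l j then δ l else 1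

theorem shrinkFactor_nonneg (hδ0 : ∀ l, 0 ≤ δ l) (j : κ) : 0 ≤ shrinkFactor A δ j :=
  prod_nonneg fun l _ => ite_nonneg (hδ0 l) zero_le_one

theorem shrinkFactor_le_one (hδ0 : ∀ l, 0 ≤ δ l) (hδ1 : ∀ l, δ l ≤ 1) (j : κ) :
    shrinkFactor A δ j ≤ 1 :=
  prod_le_one (fun l _ => ite_nonneg (hδ0 l) zero_le_one) fun l _ => ite_le_one (hδ1 l) le_rfl

theorem shrinkFactor_le (hδ0 : ∀ l, 0 ≤ δ l) (hδ1 : ∀ l, δ l ≤ 1) {l : ι} {j : κ}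
    (h : 0 < A l j) : shrinkFactor A δ j ≤ δ l := by
  classical
  rw [shrinkFactor, ← mul_prod_erase _ _ (mem_univ l), if_pos h]
  exact mul_le_of_le_one_right (hδ0 l)
    (prod_le_one (fun i _ => ite_nonneg (hδ0 i) zero_le_one) fun i _ => ite_le_one (hδ1 i) le_rfl)

theorem one_sub_shrinkFactor_le (hδ0 : ∀ l, 0 ≤ δ l) (hδ1 : ∀ l, δ l ≤ 1) (j : κ) :
    1 - shrinkFactor A δ j ≤ ∑ l, if 0 < A l j then 1 - δ l else 0 := by
  refine (one_sub_prod_le_sum_one_sub _ (fun l _ => ite_nonneg (hδ0 l) zero_le_one)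
    fun l _ => ite_le_one (hδ1 l) le_rfl).trans_eq (sum_congr rfl fun l _ => ?_)
  split_ifs <;> simp

theorem sum_mul_shrinkFactor_le (hA : ∀ l j, 0 ≤ A l j) (hδ0 : ∀ l, 0 ≤ δ l)
    (hδ1 : ∀ l, δ l ≤ 1) [Fintype κ] {x : κ → ℝ} (hx : ∀ j, 0 ≤ x j) (l : ι) :
    ∑ j, A l j * (x j * shrinkFactor A δ j) ≤ δ l * ∑ j, A l j * x j := by
  rw [mul_sum]
  refine sum_le_sum fun j _ => ?_
  rcases (hA l j).eq_or_lt with h | h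
  · simp [← h]
  · calc A l j * (x j * shrinkFactor A δ j) = A l j * x j * shrinkFactor A δ j := by ring
      _ ≤ A l j * x j * δ l := by
        gcongr
        · exact mul_nonneg h.le (hx j)
        · exact shrinkFactor_le A hδ0 hδ1 h
      _ = δ l * (A l j * x j) := by ring

end ShrinkFactor

section DLP

variable {m n : ℕ} (A : Matrix (Fin m) (Fin n) ℝ) (r : Fin n → ℝ)

theorem rMax_nonneg (hA : ∀ l j, 0 ≤ A l j) (hr : ∀ j, 0 ≤ r j) (l : Fin m) :
    0 ≤ rMax A r l :=
  Real.sSup_nonneg <| by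
    rintro _ ⟨j, -, rfl⟩
    exact div_nonneg (hr j) (hA l j)

theorem le_rMax_mul {l : Fin m} {j : Fin n} (h : 0 < A l j) : r j ≤ rMax A r l * A l j := by
  have hbdd : BddAbove {v : ℝ | ∃ j : Fin n, 0 < A l j ∧ v = r j / A l j} :=
    (Set.finite_range fun j => r j / A l j).bddAbove.mono <| by
      rintro _ ⟨j, -, rfl⟩
      exact ⟨j, rfl⟩
  exact (div_le_iff₀ h).1 (le_csSup hbdd ⟨j, h, rfl⟩)

theorem revenue_le_dlpValue {lam : Fin n → ℝ} {c : Fin m → ℝ} {x : Fin n → ℝ}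
    (hxc : ∀ l, ∑ j, A l j * x j ≤ c l) (hx : ∀ j, 0 ≤ x j ∧ x j ≤ lam j) :
    ∑ j, r j * x j ≤ dlpValue A r lam c := by
  refine le_csSup ⟨∑ j, |r j| * lam j, ?_⟩ ⟨x, hxc, hx, rfl⟩
  rintro _ ⟨y, -, hy, rfl⟩
  refine sum_le_sum fun j _ => ?_
  calc r j * y j ≤ |r j| * y j := mul_le_mul_of_nonneg_right (le_abs_self _) (hy j).1
    _ ≤ |r j| * lam j := mul_le_mul_of_nonneg_left (hy j).2 (abs_nonneg _)

theorem dlpValue_nonneg (hr : ∀ j, 0 ≤ r j) (lam : Fin n → ℝ) (c : Fin m → ℝ) :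
    0 ≤ dlpValue A r lam c :=
  Real.sSup_nonneg <| by
    rintro _ ⟨x, -, hx, rfl⟩
    exact sum_nonneg fun j _ => mul_nonneg (hr j) (hx j).1

theorem revenue_sub_revenue_shrink_le (hA : ∀ l j, 0 ≤ A l j) (hr : ∀ j, 0 ≤ r j)
    {δ : Fin m → ℝ} (hδ0 : ∀ l, 0 ≤ δ l) (hδ1 : ∀ l, δ l ≤ 1) {x : Fin n → ℝ} (hx : ∀ j, 0 ≤ x j) :
    ∑ j, r j * x j - ∑ j, r j * (x j * shrinkFactor A δ j)
      ≤ ∑ l, rMax A r l * ((1 - δ l) * ∑ j, A l j * x j) := by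
  have hterm : ∀ l j, r j * x j * (if 0 < A l j then 1 - δ l else 0)
      ≤ rMax A r l * (1 - δ l) * (A l j * x j) := by
    intro l j
    split_ifs with h
    · calc r j * x j * (1 - δ l) = r j * (x j * (1 - δ l)) := by ring
        _ ≤ rMax A r l * A l j * (x j * (1 - δ l)) :=
          mul_le_mul_of_nonneg_right (le_rMax_mul A r h)
            (mul_nonneg (hx j) (sub_nonneg.2 (hδ1 l)))
        _ = _ := by ring
    · simp [le_antisymm (not_lt.1 h) (hA l j)]
  calc ∑ j, r j * x j - ∑ j, r j * (x j * shrinkFactor A δ j)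
        = ∑ j, r j * x j * (1 - shrinkFactor A δ j) := by
          rw [← sum_sub_distrib]; exact sum_congr rfl fun j _ => by ring
    _ ≤ ∑ j, r j * x j * ∑ l, if 0 < A l j then 1 - δ l else 0 :=
        sum_le_sum fun j _ => mul_le_mul_of_nonneg_left
          (one_sub_shrinkFactor_le A hδ0 hδ1 j) (mul_nonneg (hr j) (hx j))
    _ = ∑ l, ∑ j, r j * x j * (if 0 < A l j then 1 - δ l else 0) := by
        simp_rw [mul_sum]; exact sum_comm
    _ ≤ ∑ l, ∑ j, rMax A r l * (1 - δ l) * (A l j * x j) :=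
        sum_le_sum fun l _ => sum_le_sum fun j _ => hterm l j
    _ = ∑ l, rMax A r l * ((1 - δ l) * ∑ j, A l j * x j) := by simp_rw [← mul_sum, mul_assoc]

theorem revenue_le_dlpValue_add (hA : ∀ l j, 0 ≤ A l j) (hr : ∀ j, 0 ≤ r j)
    {lam : Fin n → ℝ} {b b' : Fin m → ℝ} (hb' : ∀ l, 0 ≤ b' l) {x : Fin n → ℝ}
    (hxb : ∀ l, ∑ j, A l j * x j ≤ b l) (hx : ∀ j, 0 ≤ x j ∧ x j ≤ lam j) :
    ∑ j, r j * x j ≤ dlpValue A r lam b' + ∑ l, rMax A r l * max (b l - b' l) 0 := by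
  set usage : Fin m → ℝ := fun l => ∑ j, A l j * x j
  have husage : ∀ l, 0 ≤ usage l := fun l =>
    sum_nonneg fun j _ => mul_nonneg (hA l j) (hx j).1
  set δ : Fin m → ℝ := fun l => min 1 (b' l / usage l)
  have hδ0 : ∀ l, 0 ≤ δ l := fun l => le_min zero_le_one (div_nonneg (hb' l) (husage l))
  have hδ1 : ∀ l, δ l ≤ 1 := fun l => min_le_left _ _
  have hδusage : ∀ l, δ l * usage l = min (usage l) (b' l) := fun l =>
    min_one_div_mul_self (husage l) (hb' l)
  set x' : Fin n → ℝ := fun j => x j * shrinkFactor A δ j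
  have hx'b' : ∀ l, ∑ j, A l j * x' j ≤ b' l := fun l =>
    (sum_mul_shrinkFactor_le A hA hδ0 hδ1 (fun j => (hx j).1) l).trans
      ((hδusage l).trans_le (min_le_right _ _))
  have hx' : ∀ j, 0 ≤ x' j ∧ x' j ≤ lam j := fun j =>
    ⟨mul_nonneg (hx j).1 (shrinkFactor_nonneg A hδ0 j),
      (mul_le_of_le_one_right (hx j).1 (shrinkFactor_le_one A hδ0 hδ1 j)).trans (hx j).2⟩
  have hshortfall : ∀ l, (1 - δ l) * usage l ≤ max (b l - b' l) 0 := fun l => by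
    rw [sub_mul, one_mul, hδusage]
    rcases min_cases (usage l) (b' l) with ⟨h, -⟩ | ⟨h, -⟩ <;> rw [h]
    · simp
    · exact (sub_le_sub_right (hxb l) _).trans (le_max_left _ _)
  calc ∑ j, r j * x j
      ≤ ∑ j, r j * x' j + ∑ l, rMax A r l * ((1 - δ l) * usage l) :=
        sub_le_iff_le_add'.1 (revenue_sub_revenue_shrink_le A r hA hr hδ0 hδ1 fun j => (hx j).1)
    _ ≤ dlpValue A r lam b' + ∑ l, rMax A r l * max (b l - b' l) 0 := by
        gcongr with l
        · exact revenue_le_dlpValue A r hx'b' hx'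
        · exact rMax_nonneg A r hA hr l
        · exact hshortfall l

end DLP

theorem dlp_sensitivity_general {m n : ℕ} (A : Matrix (Fin m) (Fin n) ℝ)
    (r lam : Fin n → ℝ) (b b' : Fin m → ℝ)
    (hA : ∀ l j, 0 ≤ A l j) (hr : ∀ j, 0 ≤ r j)
    (hb' : ∀ l, 0 ≤ b' l) :
    dlpValue A r lam b - dlpValue A r lam b'
      ≤ ∑ l, rMax A r l * max (b l - b' l) 0 := by
  refine sub_le_iff_le_add'.2 (Real.sSup_le ?_ ?_)
  · rintro _ ⟨x, hxb, hx, rfl⟩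
    exact revenue_le_dlpValue_add A r hA hr hb' hxb hx
  · exact add_nonneg (dlpValue_nonneg A r hr lam b')
      (sum_nonneg fun l _ => mul_nonneg (rMax_nonneg A r hA hr l) (le_max_right _ _))

/-- Sensitivity of the DLP value in the capacity vector:
`V(b) − V(b') ≤ Σ_l r^l_max · (b_l − b'_l)⁺`. -/
theorem dlp_sensitivity {m n : ℕ} (A : Matrix (Fin m) (Fin n) ℝ)
    (r lam : Fin n → ℝ) (b b' : Fin m → ℝ)
    (hA : ∀ l j, 0 ≤ A l j) (hr : ∀ j, 0 ≤ r j) (hlam : ∀ j, 0 ≤ lam j)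
    (hb : ∀ l, 0 ≤ b l) (hb' : ∀ l, 0 ≤ b' l) :
    dlpValue A r lam b - dlpValue A r lam b'
      ≤ ∑ l, rMax A r l * max (b l - b' l) 0 :=
  dlp_sensitivity_general A r lam b b' hA hr hb'
end

section
/- For every integer T ≥ 1, Σ_{t=1}^{T} √( Σ_{i=1}^{t−1} 1/(T−i)² ) ≤ 2√T + √2 (where the inner sum over an empty range is 0). -/
/-!
Substituting `k = T - i` and `m = T - t`, the `t`-th inner sum is the tail `∑_{m < k < T} 1/k²`
of `∑ 1/k²`. For `m ≥ 1` the tail telescopes against `1/(k-1) - 1/k` to at most `1/m`, and for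
`m = 0` it is at most `2`. Hence the sum is at most `∑_{m=1}^{T-1} 1/√m + √2`, and
`1/√m ≤ 2(√m - √(m-1))` bounds the remaining sum by `2√(T-1)`.
-/

open Finset Real

lemma sum_Icc_one_comp_sub_eq_sum_Ioo {M : Type*} [AddCommMonoid M] (f : ℝ → M) {t T : ℕ}
    (ht : t ≤ T) :
    ∑ i ∈ Icc 1 (t - 1), f ((T : ℝ) - i) = ∑ k ∈ Ioo (T - t) T, f k := by
  have hIcc : Icc 1 (t - 1) = Ico 1 t := by ext; simp only [mem_Icc, mem_Ico]; omega
  have hIoo : Ioo (T - t) T = Ico (T + 1 - t) (T + 1 - 1) := by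
    ext; simp only [mem_Ioo, mem_Ico]; omega
  rw [hIcc, hIoo, ← sum_Ico_reflect (fun k : ℕ => f k) 1 (by omega)]
  refine sum_congr rfl fun i hi => ?_
  rw [Nat.cast_sub (by rw [mem_Ico] at hi; omega)]

lemma sum_Icc_one_comp_sub_eq_sum_range {M : Type*} [AddCommMonoid M] (f : ℕ → M) (T : ℕ) :
    ∑ t ∈ Icc 1 T, f (T - t) = ∑ m ∈ range T, f m := by
  rw [← Finset.Ico_add_one_right_eq_Icc, sum_Ico_reflect f 1 le_rfl, Nat.add_sub_cancel, Nat.sub_self,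
    Nat.Ico_zero_eq_range]

lemma sum_Ioo_inv_sq_le_inv {α : Type*} [Field α] [LinearOrder α] [IsStrictOrderedRing α]
    {k : ℕ} (hk : k ≠ 0) (n : ℕ) :
    ∑ i ∈ Ioo k n, ((i : α) ^ 2)⁻¹ ≤ (k : α)⁻¹ :=
  calc ∑ i ∈ Ioo k n, ((i : α) ^ 2)⁻¹
      ≤ ∑ i ∈ Ioc k (max k n), ((i : α) ^ 2)⁻¹ :=
        sum_le_sum_of_subset_of_nonneg
          (fun i hi => by simp only [mem_Ioo, mem_Ioc] at hi ⊢; omega)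
          (fun _ _ _ => by positivity)
    _ ≤ (k : α)⁻¹ - ((max k n : ℕ) : α)⁻¹ := sum_Ioc_inv_sq_le_sub hk (le_max_left k n)
    _ ≤ (k : α)⁻¹ := sub_le_self _ (by positivity)

lemma inv_sqrt_add_one_le {x : ℝ} (hx : 0 ≤ x) : (√(x + 1))⁻¹ ≤ 2 * (√(x + 1) - √x) := by
  have hpos : 0 < √(x + 1) := sqrt_pos.2 (by linarith)
  have hmono : √x ≤ √(x + 1) := sqrt_le_sqrt (by linarith)
  -- `(√(x+1) + √x)(√(x+1) - √x) = 1` and `√(x+1) + √x ≤ 2√(x+1)`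
  rw [inv_le_iff_one_le_mul₀' hpos]
  nlinarith [sq_sqrt hx, sq_sqrt (show 0 ≤ x + 1 by linarith)]

lemma sum_range_inv_sqrt_succ_le (n : ℕ) : ∑ m ∈ range n, (√((m : ℝ) + 1))⁻¹ ≤ 2 * √n := by
  induction n with
  | zero => simp
  | succ n ih =>
    rw [sum_range_succ, Nat.cast_succ]
    linarith [inv_sqrt_add_one_le n.cast_nonneg]

/-- Summation step for the `O(√T)` bound on the frequent re-solving heuristic:
`Σ_{t=1}^{T} √( Σ_{i=1}^{t−1} 1/(T−i)² ) ≤ 2√T + √2`. -/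
theorem sum_sqrt_inv_sq_le (T : ℕ) (hT : 1 ≤ T) :
    ∑ t ∈ Finset.Icc 1 T,
        Real.sqrt (∑ i ∈ Finset.Icc 1 (t - 1), (1 : ℝ) / ((T : ℝ) - (i : ℝ)) ^ 2)
      ≤ 2 * Real.sqrt T + Real.sqrt 2 := by
  set tail : ℕ → ℝ := fun m => √(∑ k ∈ Ioo m T, ((k : ℝ) ^ 2)⁻¹)
  have hreindex : ∑ t ∈ Icc 1 T, √(∑ i ∈ Icc 1 (t - 1), (1 : ℝ) / ((T : ℝ) - i) ^ 2)
      = ∑ m ∈ range T, tail m := by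
    rw [← sum_Icc_one_comp_sub_eq_sum_range tail T]
    refine sum_congr rfl fun t ht => ?_
    simp only [one_div, tail]
    rw [sum_Icc_one_comp_sub_eq_sum_Ioo (fun x => (x ^ 2)⁻¹) (mem_Icc.1 ht).2]
  have htail_succ (m : ℕ) : tail (m + 1) ≤ (√((m : ℝ) + 1))⁻¹ := by
    rw [← sqrt_inv, ← Nat.cast_succ]
    exact sqrt_le_sqrt (sum_Ioo_inv_sq_le_inv m.succ_ne_zero T)
  have htail_zero : tail 0 ≤ √2 :=
    sqrt_le_sqrt ((sum_Ioo_inv_sq_le 0 T).trans_eq (by norm_num))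
  obtain ⟨n, rfl⟩ : ∃ n, T = n + 1 := ⟨T - 1, by omega⟩
  rw [hreindex, sum_range_succ']
  calc ∑ m ∈ range n, tail (m + 1) + tail 0
      ≤ 2 * √n + √2 :=
        add_le_add ((sum_le_sum fun m _ => htail_succ m).trans (sum_range_inv_sqrt_succ_le n))
          htail_zero
    _ ≤ 2 * √((n + 1 : ℕ) : ℝ) + √2 := by gcongr; simp
end

section
/- For every real κ > 0 there exists a constant M (depending only on κ) such that for every real T ≥ e^e, setting K := ⌈ log(log T) / log(6/5) ⌉, one has Σ_{u=0}^{K−1} T^{(5/6)^u} · exp( −κ · T^{(5/6)^u / 6} ) ≤ M. -/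
/-!
Write `x = (5/6)^u · log T` and `y = T^((5/6)^u / 6)`, so the `u`-th summand is `y⁶ e^{-κy}`.
Bounding `e^{κy}` below by its Taylor term of degree 12 gives
`y⁶ e^{-κy} ≤ 12!/κ¹² · y⁻⁶ = 12!/κ¹² · e^{-x}`. The choice of `K` forces `(6/5)^{K-1} < log T`,
hence `x ≥ (6/5)^{K-1-u} ≥ (K-1-u)/5`: read from the top index down, the summands are dominated
by a geometric series of ratio `e^{-1/5}`, independent of `T`.
-/

open Real Finset
open scoped Nat

lemma pow_mul_exp_neg_mul_le (n : ℕ) {κ y : ℝ} (hκ : 0 < κ) (hy : 0 < y) :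
    y ^ n * exp (-κ * y) ≤ (2 * n)! / κ ^ (2 * n) / y ^ n := by
  have hexp : (κ * y) ^ (2 * n) / (2 * n)! ≤ exp (κ * y) :=
    Real.pow_div_factorial_le_exp _ (by positivity) _
  rw [neg_mul, exp_neg, ← div_eq_mul_inv, div_le_iff₀ (exp_pos _)]
  calc y ^ n = (2 * n)! / κ ^ (2 * n) / y ^ n * ((κ * y) ^ (2 * n) / (2 * n)!) := by
        field_simp
        ring
    _ ≤ (2 * n)! / κ ^ (2 * n) / y ^ n * exp (κ * y) := by gcongr

lemma rpow_mul_exp_neg_rpow_div_le {n : ℕ} (hn : n ≠ 0) {κ T : ℝ} (hκ : 0 < κ) (hT : 0 < T)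
    (a : ℝ) : T ^ a * exp (-κ * T ^ (a / n)) ≤ (2 * n)! / κ ^ (2 * n) / T ^ a := by
  have hpow : (T ^ (a / n)) ^ n = T ^ a := by
    rw [← rpow_natCast, ← rpow_mul hT.le, div_mul_cancel₀ _ (Nat.cast_ne_zero.2 hn)]
  simpa only [hpow] using pow_mul_exp_neg_mul_le n hκ (rpow_pos_of_pos hT (a / n))

lemma pow_lt_of_lt_ceil_log_div_log {b L : ℝ} (hb : 1 < b) (hL : 0 < L) {k : ℕ}
    (hk : k < ⌈log L / log b⌉₊) : b ^ k < L := by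
  rw [pow_lt_iff_lt_log (by linarith) hL, ← lt_div_iff₀ (log_pos hb)]
  exact Nat.lt_ceil.1 hk

lemma sub_div_five_le_five_sixths_pow_mul {k u : ℕ} (hu : u ≤ k) {L : ℝ}
    (hk : (6 / 5 : ℝ) ^ k < L) : ((k - u : ℕ) : ℝ) / 5 ≤ (5 / 6) ^ u * L := by
  have bernoulli : 1 + ((k - u : ℕ) : ℝ) * (1 / 5) ≤ (1 + 1 / 5) ^ (k - u) :=
    one_add_mul_le_pow (by norm_num) _
  have split : (6 / 5 : ℝ) ^ (k - u) = (5 / 6) ^ u * (6 / 5) ^ k := by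
    rw [← pow_sub_mul_pow (6 / 5 : ℝ) hu, mul_left_comm, ← mul_pow]
    norm_num
  calc ((k - u : ℕ) : ℝ) / 5 ≤ (6 / 5) ^ (k - u) := by norm_num at bernoulli; linarith
    _ = (5 / 6) ^ u * (6 / 5) ^ k := split
    _ ≤ (5 / 6) ^ u * L := by gcongr

lemma rpow_five_sixths_pow_mul_exp_le {κ T : ℝ} (hκ : 0 < κ) (hT : 1 < T) {u : ℕ}
    (hu : u < ⌈log (log T) / log (6 / 5)⌉₊) :
    T ^ ((5 / 6 : ℝ) ^ u) * exp (-κ * T ^ ((5 / 6 : ℝ) ^ u / 6)) ≤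
      12! / κ ^ 12 * exp (-(1 / 5)) ^ (⌈log (log T) / log (6 / 5)⌉₊ - 1 - u) := by
  set K := ⌈log (log T) / log (6 / 5)⌉₊
  have hT0 : 0 < T := by linarith
  have hgrowth : ((K - 1 - u : ℕ) : ℝ) / 5 ≤ (5 / 6) ^ u * log T :=
    sub_div_five_le_five_sixths_pow_mul (by omega)
      (pow_lt_of_lt_ceil_log_div_log (by norm_num) (log_pos hT) (by omega))
  calc T ^ ((5 / 6 : ℝ) ^ u) * exp (-κ * T ^ ((5 / 6 : ℝ) ^ u / 6))
      ≤ 12! / κ ^ 12 / T ^ ((5 / 6 : ℝ) ^ u) := by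
        simpa using rpow_mul_exp_neg_rpow_div_le (n := 6) (by norm_num) hκ hT0 ((5 / 6) ^ u)
    _ = 12! / κ ^ 12 * exp (-((5 / 6) ^ u * log T)) := by
        rw [rpow_def_of_pos hT0, exp_neg, div_eq_mul_inv, mul_comm (log T)]
    _ ≤ 12! / κ ^ 12 * exp (-(1 / 5)) ^ (K - 1 - u) := by
        rw [← exp_nat_mul]
        gcongr
        linarith

/-- Uniform boundedness of the accumulated failure probabilities in the IRT analysis:
for every `κ > 0` there is `M` such that for every `T ≥ e^e`, with
`K = ⌈log(log T)/log(6/5)⌉`, `Σ_{u=0}^{K−1} T^{(5/6)^u}·exp(−κ·T^{(5/6)^u/6}) ≤ M`. -/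
theorem irt_failure_sum_uniformly_bounded (κ : ℝ) (hκ : 0 < κ) :
    ∃ M : ℝ, ∀ T : ℝ, Real.exp (Real.exp 1) ≤ T →
      ∑ u ∈ Finset.range (⌈Real.log (Real.log T) / Real.log (6 / 5)⌉₊),
          T ^ ((5 / 6 : ℝ) ^ u) * Real.exp (-κ * T ^ ((5 / 6 : ℝ) ^ u / 6)) ≤ M := by
  set r := exp (-(1 / 5))
  have hr : r < 1 := exp_lt_one_iff.2 (by norm_num)
  refine ⟨12! / κ ^ 12 * (1 - r)⁻¹, fun T hT => ?_⟩
  have hT1 : 1 < T := lt_of_lt_of_le (one_lt_exp_iff.2 (exp_pos 1)) hT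
  set K := ⌈log (log T) / log (6 / 5)⌉₊
  calc ∑ u ∈ range K, T ^ ((5 / 6 : ℝ) ^ u) * exp (-κ * T ^ ((5 / 6 : ℝ) ^ u / 6))
      ≤ ∑ u ∈ range K, 12! / κ ^ 12 * r ^ (K - 1 - u) :=
        sum_le_sum fun u hu => rpow_five_sixths_pow_mul_exp_le hκ hT1 (mem_range.1 hu)
    _ = 12! / κ ^ 12 * ∑ j ∈ range K, r ^ j := by
        rw [← mul_sum, sum_range_reflect (r ^ ·) K]
    _ ≤ 12! / κ ^ 12 * (1 - r)⁻¹ := by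
        gcongr
        rw [range_eq_Ico]
        exact (geom_sum_Ico_le_of_lt_one (exp_pos _).le hr).trans_eq (by rw [pow_zero, one_div])
end
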